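/- Let X be a Banach space with property (*) (for real-valued functions, constant C₀), and let A, W ⊆ X be sets with d := dist(A, W) > 0. Then there exists a C¹ smooth function u : X → [0, 1] such that u = 1 on A, u = 0 on W, and Lip(u) ≤ 2C₀/d. -/

import Mathlib

/-!
Extend the indicator of `A` from `A ∪ W`, where it is `(1/d)`-Lipschitz, by property (*) with
accuracy `1/8`: the approximant `g` is `≥ 7/8` on `A` and `≤ 1/8` on `W`. Composing `g` with a
`C¹` step function that is `0` below `1/8`, `1` above `7/8` and `2`-Lipschitz in between gives `u`.
-/

open Set intervalIntegral

noncomputable section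

/-- Its primitive `smoothStep` is the smoothstep `3c² - 2c³` of the clamp `c` of `t` to `[0, 1]`. -/
def smoothStepDeriv (t : ℝ) : ℝ :=
  6 * (projIcc (0 : ℝ) 1 zero_le_one t : ℝ) * (1 - projIcc (0 : ℝ) 1 zero_le_one t)

def smoothStep (t : ℝ) : ℝ := ∫ s in (0 : ℝ)..t, smoothStepDeriv s

theorem continuous_smoothStepDeriv : Continuous smoothStepDeriv := by
  unfold smoothStepDeriv
  fun_prop

theorem smoothStepDeriv_nonneg (t : ℝ) : 0 ≤ smoothStepDeriv t := by
  obtain ⟨h₀, h₁⟩ := (projIcc (0 : ℝ) 1 zero_le_one t).2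
  unfold smoothStepDeriv
  nlinarith

theorem smoothStepDeriv_le (t : ℝ) : smoothStepDeriv t ≤ 3 / 2 := by
  unfold smoothStepDeriv
  nlinarith [sq_nonneg (2 * (projIcc (0 : ℝ) 1 zero_le_one t : ℝ) - 1)]

theorem smoothStepDeriv_of_nonpos {t : ℝ} (ht : t ≤ 0) : smoothStepDeriv t = 0 := by
  simp [smoothStepDeriv, projIcc_of_le_left _ ht]

theorem smoothStepDeriv_of_one_le {t : ℝ} (ht : 1 ≤ t) : smoothStepDeriv t = 0 := by
  simp [smoothStepDeriv, projIcc_of_right_le _ ht]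

theorem smoothStepDeriv_of_mem_Icc {t : ℝ} (ht : t ∈ Icc 0 1) :
    smoothStepDeriv t = 6 * t * (1 - t) := by
  simp [smoothStepDeriv, projIcc_of_mem _ ht]

theorem hasDerivAt_smoothStep (t : ℝ) : HasDerivAt smoothStep (smoothStepDeriv t) t :=
  (continuous_smoothStepDeriv.integral_hasStrictDerivAt 0 t).hasDerivAt

theorem contDiff_smoothStep : ContDiff ℝ 1 smoothStep := by
  have hderiv : deriv smoothStep = smoothStepDeriv :=
    funext fun t => (hasDerivAt_smoothStep t).deriv
  rw [contDiff_one_iff_deriv, hderiv]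
  exact ⟨fun t => (hasDerivAt_smoothStep t).differentiableAt, continuous_smoothStepDeriv⟩

theorem smoothStep_sub_smoothStep (a b : ℝ) :
    smoothStep b - smoothStep a = ∫ s in a..b, smoothStepDeriv s :=
  integral_interval_sub_left (continuous_smoothStepDeriv.intervalIntegrable 0 b)
    (continuous_smoothStepDeriv.intervalIntegrable 0 a)

theorem monotone_smoothStep : Monotone smoothStep := fun a b hab => by
  have : 0 ≤ ∫ s in a..b, smoothStepDeriv s :=
    integral_nonneg hab fun s _ => smoothStepDeriv_nonneg s
  linarith [smoothStep_sub_smoothStep a b]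

theorem smoothStep_of_nonpos {t : ℝ} (ht : t ≤ 0) : smoothStep t = 0 := by
  have hzero : ∫ s in t..0, smoothStepDeriv s = 0 := by
    rw [integral_congr (g := fun _ => 0) fun s hs =>
      smoothStepDeriv_of_nonpos (uIcc_of_le ht ▸ hs).2]
    simp
  have h0 : smoothStep 0 = 0 := integral_same
  linarith [smoothStep_sub_smoothStep t 0]

theorem smoothStep_one : smoothStep 1 = 1 := by
  have hderiv : ∀ s ∈ uIcc (0 : ℝ) 1,
      HasDerivAt (fun s : ℝ => 3 * s ^ 2 - 2 * s ^ 3) (6 * s * (1 - s)) s := fun s _ =>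
    (((hasDerivAt_pow 2 s).const_mul 3).sub ((hasDerivAt_pow 3 s).const_mul 2)).congr_deriv
      (by push_cast; ring)
  rw [smoothStep,
    integral_congr fun s hs => smoothStepDeriv_of_mem_Icc (uIcc_of_le (zero_le_one' ℝ) ▸ hs),
    integral_eq_sub_of_hasDerivAt hderiv (Continuous.intervalIntegrable (by fun_prop) _ _)]
  norm_num

theorem smoothStep_of_one_le {t : ℝ} (ht : 1 ≤ t) : smoothStep t = 1 := by
  have hzero : ∫ s in (1 : ℝ)..t, smoothStepDeriv s = 0 := by
    rw [integral_congr (g := fun _ => 0) fun s hs =>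
      smoothStepDeriv_of_one_le (uIcc_of_le ht ▸ hs).1]
    simp
  linarith [smoothStep_sub_smoothStep 1 t, smoothStep_one]

theorem smoothStep_mem_Icc (t : ℝ) : smoothStep t ∈ Icc 0 1 :=
  ⟨smoothStep_of_nonpos (min_le_right t 0) ▸ monotone_smoothStep (min_le_left t 0),
    smoothStep_of_one_le (le_max_right t 1) ▸ monotone_smoothStep (le_max_left t 1)⟩

theorem abs_smoothStep_sub_le (a b : ℝ) : |smoothStep a - smoothStep b| ≤ 3 / 2 * |a - b| := by
  rw [smoothStep_sub_smoothStep b a, ← Real.norm_eq_abs]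
  refine norm_integral_le_of_norm_le_const fun s _ => ?_
  rw [Real.norm_eq_abs, abs_of_nonneg (smoothStepDeriv_nonneg s)]
  exact smoothStepDeriv_le s

theorem exists_contDiff_two_lipschitz_step :
    ∃ φ : ℝ → ℝ, ContDiff ℝ 1 φ ∧ (∀ t, φ t ∈ Icc 0 1) ∧ (∀ t, 7 / 8 ≤ t → φ t = 1) ∧
      (∀ t ≤ 1 / 8, φ t = 0) ∧ ∀ s t, |φ s - φ t| ≤ 2 * |s - t| := by
  refine ⟨fun t => smoothStep (4 / 3 * (t - 1 / 8)), contDiff_smoothStep.comp (by fun_prop),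
    fun t => smoothStep_mem_Icc _, fun t ht => smoothStep_of_one_le (by linarith),
    fun t ht => smoothStep_of_nonpos (by linarith), fun s t => ?_⟩
  calc |smoothStep (4 / 3 * (s - 1 / 8)) - smoothStep (4 / 3 * (t - 1 / 8))|
      ≤ 3 / 2 * |4 / 3 * (s - 1 / 8) - 4 / 3 * (t - 1 / 8)| := abs_smoothStep_sub_le _ _
    _ = 2 * |s - t| := by
      rw [← mul_sub, abs_mul, abs_of_pos (by norm_num : (0 : ℝ) < 4 / 3), sub_sub_sub_cancel_right]
      ring

end

theorem abs_indicator_one_sub_le_of_le_norm_sub {E : Type*} [SeminormedAddGroup E]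
    {A W : Set E} {d : ℝ} (hd : 0 < d) (hsep : ∀ a ∈ A, ∀ w ∈ W, d ≤ ‖a - w‖)
    {x y : E} (hx : x ∈ A ∪ W) (hy : y ∈ A ∪ W) :
    |A.indicator 1 x - A.indicator 1 y| ≤ 1 / d * ‖x - y‖ := by
  have hsep' : ∀ a ∈ A, ∀ w ∈ A ∪ W, w ∉ A → 1 ≤ 1 / d * ‖a - w‖ := fun a ha w hw hwA => by
    rw [one_div, ← div_eq_inv_mul, one_le_div hd]
    exact hsep a ha w (hw.resolve_left hwA)
  have hnonneg : 0 ≤ 1 / d * ‖x - y‖ := mul_nonneg (one_div_nonneg.2 hd.le) (norm_nonneg _)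
  by_cases hxA : x ∈ A <;> by_cases hyA : y ∈ A
  · simpa [hxA, hyA] using hnonneg
  · simpa [hxA, hyA] using hsep' x hxA y hy hyA
  · simpa [hxA, hyA, norm_sub_rev x y] using hsep' y hyA x hx hxA
  · simpa [hxA, hyA] using hnonneg

theorem smooth_urysohn_of_property_star_general
    {X : Type*} [NormedAddCommGroup X] [NormedSpace ℝ X]
    (C₀ : ℝ)
    (hstar : ∀ (B : Set X) (f : X → ℝ) (L : ℝ), 0 ≤ L →
      (∀ x ∈ B, ∀ y ∈ B, |f x - f y| ≤ L * ‖x - y‖) →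
      ∀ ε > (0 : ℝ), ∃ g : X → ℝ, ContDiff ℝ 1 g ∧
        (∀ x ∈ B, |f x - g x| < ε) ∧ ∀ x y : X, |g x - g y| ≤ C₀ * L * ‖x - y‖)
    (A W : Set X) (d : ℝ) (hd : 0 < d)
    (hsep : ∀ a ∈ A, ∀ w ∈ W, d ≤ ‖a - w‖) :
    ∃ u : X → ℝ, ContDiff ℝ 1 u ∧
      (∀ x : X, u x ∈ Set.Icc (0 : ℝ) 1) ∧
      (∀ a ∈ A, u a = 1) ∧ (∀ w ∈ W, u w = 0) ∧
      (∀ x y : X, |u x - u y| ≤ (2 * C₀ / d) * ‖x - y‖) := by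
  obtain ⟨g, hg, hgf, hgLip⟩ := hstar (A ∪ W) (A.indicator 1) (1 / d) (by positivity)
    (fun x hx y hy => abs_indicator_one_sub_le_of_le_norm_sub hd hsep hx hy) (1 / 8) (by norm_num)
  obtain ⟨φ, hφ, hφ_mem, hφ_one, hφ_zero, hφLip⟩ := exists_contDiff_two_lipschitz_step
  have hAW : Disjoint A W := disjoint_left.2 fun w hwA hwW => by
    simpa using (hsep w hwA w hwW).trans_lt' hd
  refine ⟨φ ∘ g, hφ.comp hg, fun x => hφ_mem _, fun a ha => hφ_one _ ?_,
    fun w hw => hφ_zero _ ?_, fun x y => ?_⟩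
  · have := hgf a (Or.inl ha)
    rw [indicator_of_mem ha, Pi.one_apply] at this
    linarith [abs_lt.1 this]
  · have := hgf w (Or.inr hw)
    rw [indicator_of_notMem (disjoint_right.1 hAW hw)] at this
    linarith [abs_lt.1 this]
  · calc |φ (g x) - φ (g y)| ≤ 2 * |g x - g y| := hφLip _ _
      _ ≤ 2 * (C₀ * (1 / d) * ‖x - y‖) := by gcongr; exact hgLip x y
      _ = 2 * C₀ / d * ‖x - y‖ := by ring

/-- If `X` has property (*) for real-valued functions with constant `C₀`, and `A, W ⊆ X`
satisfy `dist(A, W) ≥ d > 0`, then there is a `C¹` smooth function `u : X → [0,1]` with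
`u = 1` on `A`, `u = 0` on `W`, and `Lip(u) ≤ 2C₀/d`. -/
theorem smooth_urysohn_of_property_star
    {X : Type*} [NormedAddCommGroup X] [NormedSpace ℝ X] [CompleteSpace X]
    (C₀ : ℝ) (hC₀ : 1 ≤ C₀)
    (hstar : ∀ (B : Set X) (f : X → ℝ) (L : ℝ), 0 ≤ L →
      (∀ x ∈ B, ∀ y ∈ B, |f x - f y| ≤ L * ‖x - y‖) →
      ∀ ε > (0 : ℝ), ∃ g : X → ℝ, ContDiff ℝ 1 g ∧
        (∀ x ∈ B, |f x - g x| < ε) ∧ ∀ x y : X, |g x - g y| ≤ C₀ * L * ‖x - y‖)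
    (A W : Set X) (d : ℝ) (hd : 0 < d)
    (hsep : ∀ a ∈ A, ∀ w ∈ W, d ≤ ‖a - w‖) :
    ∃ u : X → ℝ, ContDiff ℝ 1 u ∧
      (∀ x : X, u x ∈ Set.Icc (0 : ℝ) 1) ∧
      (∀ a ∈ A, u a = 1) ∧ (∀ w ∈ W, u w = 0) ∧
      (∀ x y : X, |u x - u y| ≤ (2 * C₀ / d) * ‖x - y‖) :=
  smooth_urysohn_of_property_star_general C₀ hstar A W d hd hsep
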